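/- Let A be a unital C*-algebra and let v ∈ A be a partial isometry (v v* v = v). Then v*v = v v* (i.e. v is a partial unitary) if and only if (v v*)(1 − v*v) = 0 and v + 1 − v*v is a unitary in A. -/
import Mathlib


open Matrix

variable {A : Type*} [NormedRing A] [StarRing A] [CStarRing A]
  [NormedAlgebra ℂ A] [StarModule ℂ A] [CompleteSpace A]

/-- Characterization of partial unitaries among partial isometries in a unital C*-algebra:
`v*v = v v*` iff `(v v*)(1 - v*v) = 0` and `v + 1 - v*v` is a unitary. -/
theorem stmt16 (v : A) (hv : v * star v * v = v) :
    star v * v = v * star v ↔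
      (v * star v) * (1 - star v * v) = 0 ∧ (v + 1 - star v * v) ∈ unitary A := by
  have hstar : star v * v * star v = star v := by
    have := congrArg star hv
    simpa [StarMul.star_mul, mul_assoc] using this
  have hvp : v * (star v * v) = v := by
    have := congrArg star hstar
    simpa [StarMul.star_mul, mul_assoc] using this
  have hq2 : (v * star v) * (v * star v) = v * star v := by
    calc (v * star v) * (v * star v) = (v * star v * v) * star v := by noncomm_ring
    _ = v * star v := by rw [hv]
  have hp2 : (star v * v) * (star v * v) = star v * v := by
    calc (star v * v) * (star v * v) = star v * (v * star v * v) := by noncomm_ring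
    _ = star v * v := by rw [hv]
  constructor
  · intro h
    refine ⟨?_, ?_⟩
    · rw [h, mul_sub, mul_one, hq2, sub_self]
    · rw [Unitary.mem_iff]
      have hs : star (v + 1 - star v * v) = star v + 1 - star v * v := by
        simp [star_sub, star_add, StarMul.star_mul]
      constructor
      · rw [hs]
        have expand : (star v + 1 - star v * v) * (v + 1 - star v * v)
            = star v * v + star v - star v * (star v * v) + v + 1 - star v * v
              - (star v * v) * v - (star v * v) + (star v * v) * (star v * v) := by
          noncomm_ring
        rw [expand, hp2]
        have h1 : star v * (star v * v) = star v := by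
          rw [h, ← mul_assoc, hstar]
        have h2 : (star v * v) * v = v := by
          rw [h, hv]
        rw [h1, h2]
        noncomm_ring
      · rw [hs]
        have expand : (v + 1 - star v * v) * (star v + 1 - star v * v)
            = v * star v + v - v * (star v * v) + star v + 1 - star v * v
              - (star v * v) * star v - (star v * v) + (star v * v) * (star v * v) := by
          noncomm_ring
        rw [expand, hp2, hvp]
        have h1 : (star v * v) * star v = star v := by rw [mul_assoc] at hstar ⊢; exact hstar
        rw [h1, h]
        noncomm_ring
  · rintro ⟨h1, h2⟩
    have huu : (v + 1 - star v * v) * star (v + 1 - star v * v) = 1 :=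
      (Unitary.mem_iff.mp h2).2
    have hs : star (v + 1 - star v * v) = star v + 1 - star v * v := by
      simp [star_sub, star_add, StarMul.star_mul]
    rw [hs] at huu
    -- expand huu
    have key : v * star v + v - v * (star v * v) + 1 - star v * v = 1 := by
      have expand : (v + 1 - star v * v) * (star v + 1 - star v * v)
          = v * star v + v - v * (star v * v) + star v + 1 - star v * v
            - (star v * v) * star v - (star v * v) + (star v * v) * (star v * v) := by
        noncomm_ring
      have h3 : (star v * v) * star v = star v := by rw [mul_assoc] at hstar ⊢; exact hstar
      rw [expand, hp2, h3] at huu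
      calc v * star v + v - v * (star v * v) + 1 - star v * v
          = v * star v + v - v * (star v * v) + star v + 1 - star v * v
            - star v - (star v * v) + (star v * v) := by noncomm_ring
        _ = 1 := huu
    -- so q - p = v*p - v
    have key2 : v * star v - star v * v = v * (star v * v) - v := by
      have := key
      linear_combination (norm := noncomm_ring) this
    -- h1 gives q*p = q
    have hqp : (v * star v) * (star v * v) = v * star v := by
      have : v * star v - (v * star v) * (star v * v) = 0 := by
        rw [← h1]; noncomm_ring
      linear_combination (norm := noncomm_ring) -this
    -- multiply key2 on left by q
    have key3 : (v * star v) * (v * star v - star v * v) = v * (star v * v) - v := by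
      calc (v * star v) * (v * star v - star v * v)
          = (v * star v) * (v * (star v * v) - v) := by rw [key2]
        _ = ((v * star v * v) * (star v * v)) - v * star v * v := by noncomm_ring
        _ = v * (star v * v) - v := by rw [hv]
    have key4 : (v * star v) * (v * star v - star v * v) = 0 := by
      calc (v * star v) * (v * star v - star v * v)
          = (v * star v) * (v * star v) - (v * star v) * (star v * v) := by noncomm_ring
        _ = 0 := by rw [hq2, hqp, sub_self]
    have hvpv : v * (star v * v) - v = 0 := by rw [← key3, key4]
    have : v * star v - star v * v = 0 := by rw [key2, hvpv]
    linear_combination (norm := noncomm_ring) -this
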